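/- Let G be a group acting on a set of divergence-free vector fields on ℝ³ and suppose f₁ assigns to each divergence-free compactly supported 𝐛 a 1-form B with dB = ι_𝐛 ν. If f₁ were infinitesimally equivariant, i.e. L_ξ f₁(𝐛) = f₁([ξ,𝐛]) for all divergence-free ξ, 𝐛, then taking ξ = 𝐛 forces d(ι_𝐛 B) = 0, hence ⟨𝐁,𝐛⟩ is a constant function, which vanishes for compactly supported 𝐛; thus any 𝐛 with nonzero helicity ∫⟨𝐁,𝐛⟩ ≠ 0 contradicts equivariance. -/

import Mathlib

noncomputable section

open scoped BigOperators

variable {E : Type*} [NormedAddCommGroup E] [NormedSpace ℝ E]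

/-- Differential `k`-forms on (a chart of) a manifold modelled on `E`,
represented as raw maps assigning to each point a `k`-multilinear expression. -/
abbrev RawForm (E : Type*) [NormedAddCommGroup E] [NormedSpace ℝ E] (k : ℕ) :=
  E → (Fin k → E) → ℝ

/-- The exterior derivative, via the standard coordinate-free formula
`(dω)ₓ(v₀,…,v_k) = ∑ᵢ (-1)ⁱ (D_x ω(…,v̂ᵢ,…))(vᵢ)`. -/
def extD {k : ℕ} (ω : RawForm E k) : RawForm E (k + 1) :=
  fun x v => ∑ i : Fin (k + 1),
    (-1 : ℝ) ^ (i : ℕ) * fderiv ℝ (fun y => ω y (fun j => v (i.succAbove j))) x (v i)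

/-- Interior product (contraction) of a form with a vector field. -/
def iotaV {k : ℕ} (X : E → E) (ω : RawForm E (k + 1)) : RawForm E k :=
  fun x v => ω x (Fin.cons (X x) v)

/-- The Lie derivative of a form along a vector field, via Cartan's magic formula
`L_X = d ∘ ι_X + ι_X ∘ d`. -/
def lieD {k : ℕ} (X : E → E) (ω : RawForm E (k + 1)) : RawForm E (k + 1) :=
  fun x v => extD (iotaV X ω) x v + iotaV X (extD ω) x v

/-- A raw form is a genuine differential form if it is pointwise alternating and
multilinear in its arguments. -/
def IsAltForm {k : ℕ} (ω : RawForm E k) : Prop :=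
  (∀ x v (i j : Fin k), i ≠ j → v i = v j → ω x v = 0) ∧
  (∀ x v (i : Fin k) (a b : E),
    ω x (Function.update v i (a + b)) =
      ω x (Function.update v i a) + ω x (Function.update v i b)) ∧
  (∀ x v (i : Fin k) (c : ℝ) (a : E),
    ω x (Function.update v i (c • a)) = c * ω x (Function.update v i a))

/-- Smoothness of a raw form. -/
def SmoothRawForm {k : ℕ} (ω : RawForm E k) : Prop :=
  ∀ v, ContDiff ℝ (⊤ : ℕ∞) (fun x => ω x v)

/-- Euclidean 3-space, with points given by their three coordinates. -/
abbrev E3 := Fin 3 → ℝ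

/-- Partial derivative `∂f/∂xᵢ`. -/
def pd3 (i : Fin 3) (f : E3 → ℝ) (x : E3) : ℝ := fderiv ℝ f x (Pi.single i 1)

/-- Divergence of a vector field on `ℝ³`. -/
def vdiv (V : E3 → E3) (x : E3) : ℝ := ∑ i, pd3 i (fun y => V y i) x

/-- Cross product on `ℝ³`. -/
def cross3 (a b : E3) : E3 :=
  ![a 1 * b 2 - a 2 * b 1, a 2 * b 0 - a 0 * b 2, a 0 * b 1 - a 1 * b 0]

/-- Euclidean scalar product on `ℝ³`. -/
def dot3 (a b : E3) : ℝ := ∑ i, a i * b i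

/-- Curl of a vector field on `ℝ³`. -/
def vcurl (V : E3 → E3) (x : E3) : E3 :=
  ![pd3 1 (fun y => V y 2) x - pd3 2 (fun y => V y 1) x,
    pd3 2 (fun y => V y 0) x - pd3 0 (fun y => V y 2) x,
    pd3 0 (fun y => V y 1) x - pd3 1 (fun y => V y 0) x]

/-- The standard volume form `ν = dx ∧ dy ∧ dz` on `ℝ³`:
`ν(v₀,v₁,v₂)` is the determinant of the matrix with rows `v₀, v₁, v₂`. -/
def nu3 : RawForm E3 3 := fun _ v => Matrix.det (Matrix.of fun i j : Fin 3 => v i j)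

open MeasureTheory

lemma single_sum (u : E3) : (∑ j, u j • (Pi.single j 1 : E3)) = u := by
  ext k
  simp [Pi.single_apply, Finset.sum_apply]

lemma fderiv_apply_sum (f : E3 → ℝ) (_hf : DifferentiableAt ℝ f x) (u : E3) :
    fderiv ℝ f x u = ∑ j, u j * pd3 j f x := by
  conv_lhs => rw [← single_sum u, map_sum]
  exact Finset.sum_congr rfl fun j _ => by rw [_root_.map_smul]; rfl

lemma fderiv_dot3_const (B : E3 → E3) (hB : Differentiable ℝ B) (x c u : E3) :
    fderiv ℝ (fun y => dot3 (B y) c) x u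
      = ∑ i, ∑ j, c i * (u j * pd3 j (fun y => B y i) x) := by
  have hBi : ∀ i : Fin 3, DifferentiableAt ℝ (fun y => B y i) x :=
    fun i => (differentiable_pi.mp hB i) x
  have h1 : fderiv ℝ (fun y => dot3 (B y) c) x
      = ∑ i : Fin 3, fderiv ℝ (fun y => B y i * c i) x := by
    simp only [dot3]
    exact fderiv_fun_sum fun i _ => (hBi i).mul_const (c i)
  rw [h1, ContinuousLinearMap.sum_apply]
  refine Finset.sum_congr rfl fun i _ => ?_
  rw [fderiv_mul_const (hBi i), ContinuousLinearMap.smul_apply, smul_eq_mul,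
    fderiv_apply_sum _ (hBi i), Finset.mul_sum]

/-- Suppose `f₁` assigns to the divergence-free compactly supported
smooth field `𝐛` (with vector potential `𝐁`, `curl 𝐁 = 𝐛`) the 1-form `-B` where
`B = 𝐁♭` satisfies `dB = ι_𝐛 ν`.  If `f₁` were infinitesimally equivariant, i.e.
`L_ξ f₁(𝐛) = f₁([ξ,𝐛])` for all divergence-free `ξ, 𝐛`, then taking `ξ = 𝐛` (and
using `[𝐛,𝐛] = 0`) forces `L_𝐛 B = 0`, hence `d(ι_𝐛 B) = 0`, hence `⟨𝐁,𝐛⟩` is a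
constant function, which vanishes since `𝐛` is compactly supported; thus any `𝐛`
with nonzero helicity `∫ ⟨𝐁,𝐛⟩ ≠ 0` contradicts equivariance.

Formally: nonvanishing helicity rules out the instance `L_𝐛 (𝐁♭) = 0` of
equivariance (`L` is the Cartan operator `d ∘ ι + ι ∘ d`, and `𝐁♭` is the 1-form
`u ↦ ⟨𝐁, u⟩`). -/
theorem statement19 (b B : E3 → E3)
    (hb : ContDiff ℝ (⊤ : ℕ∞) b) (hB : ContDiff ℝ (⊤ : ℕ∞) B)
    (hsupp : HasCompactSupport b) (hdiv : ∀ x, vdiv b x = 0)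
    (hpot : ∀ x, vcurl B x = b x)
    (hhel : (∫ x : E3, dot3 (B x) (b x)) ≠ 0) :
    ¬ (lieD b (fun x (u : Fin 1 → E3) => dot3 (B x) (u 0)) = 0) := by
  intro h
  have hBd : Differentiable ℝ B := hB.differentiable (by simp)
  have hbd : Differentiable ℝ b := hb.differentiable (by simp)
  set g : E3 → ℝ := fun x => dot3 (B x) (b x) with hg
  have hgdiff : Differentiable ℝ g := by
    refine Differentiable.fun_sum fun i _ => ?_
    exact (differentiable_pi.mp hBd i).mul (differentiable_pi.mp hbd i)
  have hfz : ∀ x, fderiv ℝ g x = 0 := by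
    intro x
    refine ContinuousLinearMap.ext fun e => ?_
    rw [ContinuousLinearMap.zero_apply]
    -- extract the pointwise identity from `h`
    have hx := congrFun (congrFun h x) (fun _ => e)
    have e1 : Fin.succAbove (0 : Fin 2) 0 = 1 := by decide
    have e2 : Fin.succAbove (Fin.succ 0 : Fin 2) 0 = 0 := by decide
    simp only [lieD, extD, iotaV, Fin.sum_univ_succ, Fin.sum_univ_zero, e1, e2, Fin.cons_zero,
      Fin.cons_succ, Fin.val_zero, Fin.val_succ, pow_zero, pow_succ, pow_one, one_mul, neg_one_mul,
      Pi.zero_apply, add_zero, Fin.cons_one] at hx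
    have key : fderiv ℝ g x e +
        (fderiv ℝ (fun y => dot3 (B y) e) x (b x)
          - fderiv ℝ (fun y => dot3 (B y) (b x)) x e) = 0 := by
      rw [hg]; linarith [hx]
    rw [fderiv_dot3_const B hBd x e (b x), fderiv_dot3_const B hBd x (b x) e] at key
    -- curl components
    have h0 := congrFun (hpot x) 0
    have h1 := congrFun (hpot x) 1
    have h2 := congrFun (hpot x) 2
    simp only [vcurl, Matrix.cons_val_zero, Matrix.cons_val_one, Matrix.head_cons,
      Matrix.cons_val_two, Matrix.tail_cons] at h0 h1 h2
    simp only [Fin.sum_univ_three] at key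
    linear_combination key - (e 2 * b x 1 - b x 2 * e 1) * h0
      - (e 0 * b x 2 - b x 0 * e 2) * h1 - (e 1 * b x 0 - b x 1 * e 0) * h2
  obtain ⟨x₀, hx₀⟩ : ∃ x₀, x₀ ∉ tsupport b :=
    Set.ne_univ_iff_exists_notMem _ |>.mp hsupp.ne_univ
  have hb0 : b x₀ = 0 := image_eq_zero_of_notMem_tsupport hx₀
  have hzero : ∀ y, g y = 0 := by
    intro y
    rw [is_const_of_fderiv_eq_zero hgdiff hfz y x₀, hg]
    simp [hb0, dot3]
  refine hhel ?_
  rw [show g = fun _ => (0 : ℝ) from funext hzero, integral_zero]
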